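/- Let A ∈ ℝ^{n×n}, B ∈ ℝ^{m×m}, C1 ∈ ℝ^{n×s}, C2 ∈ ℝ^{m×s}, F := I_m ⊗ A + Bᵀ ⊗ I_n, and c := vec(C1 C2ᵀ). If Z ∈ ℝ^{n×m} satisfies vec(Z) ∈ K_k(F,c) := span(c, Fc, …, F^{k-1}c), then rank(Z) ≤ ks. -/

import Mathlib

open Matrix Kronecker

noncomputable section

/-- `vec X` stacks the columns of `X` on top of each other; the entry of `vec X`
indexed by `(j, i)` (column `j`, row `i`) is `X i j`. -/
def vec {n m : ℕ} (X : Matrix (Fin n) (Fin m) ℝ) : Fin m × Fin n → ℝ :=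
  fun p => X p.2 p.1

/-- The Krylov subspace `K_k(F, c) = span(c, Fc, …, F^{k-1}c)`. -/
def krylov {N : Type*} [Fintype N] [DecidableEq N] (F : Matrix N N ℝ) (c : N → ℝ) (k : ℕ) :
    Submodule ℝ (N → ℝ) :=
  Submodule.span ℝ (Set.range fun i : Fin k => (F ^ (i : ℕ)) *ᵥ c)

/-!
Since `F (vec X) = vec (A X + X B)`, every `F^p c` is the vectorization of a matrix whose columns
lie in the block Krylov space spanned by the columns of `C1, A C1, …, A^p C1`: multiplying by `A`
moves the columns one block further, multiplying by `B` on the right only recombines them. Hence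
the columns of `Z` lie in a space spanned by `k s` vectors.
-/

namespace Matrix

variable {R ι κ σ : Type*}

theorem col_mul [NonUnitalNonAssocSemiring R] [Fintype ι] (M : Matrix κ ι R) (N : Matrix ι σ R)
    (j : σ) : (M * N).col j = M *ᵥ N.col j := by
  ext
  simp [mul_apply, mulVec, dotProduct]

theorem range_mulVecLin_le_iff [CommSemiring R] [Fintype κ] {M : Matrix ι κ R}
    {W : Submodule R (ι → R)} : LinearMap.range M.mulVecLin ≤ W ↔ ∀ j, M.col j ∈ W := by
  rw [range_mulVecLin, Submodule.span_le, Set.range_subset_iff]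
  rfl

theorem sylvester_mulVec_vec [CommSemiring R] [Fintype ι] [DecidableEq ι] [Fintype κ]
    [DecidableEq κ] (A : Matrix ι ι R) (B : Matrix κ κ R) (X : Matrix ι κ R) :
    (1 ⊗ₖ A + Bᵀ ⊗ₖ 1) *ᵥ X.vec = (A * X + X * B).vec := by
  rw [add_mulVec, kronecker_mulVec_vec, kronecker_mulVec_vec, transpose_one, transpose_transpose,
    Matrix.mul_one, Matrix.one_mul, vec_add]

theorem range_mulVecLin_add_mul_le [CommSemiring R] [Fintype ι] [Fintype κ] (A : Matrix ι ι R)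
    (B : Matrix κ κ R) {X : Matrix ι κ R} {W W' : Submodule R (ι → R)}
    (hX : LinearMap.range X.mulVecLin ≤ W) (hWW' : W ≤ W') (hAW : W.map A.mulVecLin ≤ W') :
    LinearMap.range (A * X + X * B).mulVecLin ≤ W' := by
  rw [mulVecLin_add, mulVecLin_mul, mulVecLin_mul]
  refine (LinearMap.range_add_le _ _).trans (sup_le ?_ ?_)
  · rw [LinearMap.range_comp]
    exact (Submodule.map_mono hX).trans hAW
  · exact (LinearMap.range_comp_le_range _ _).trans (hX.trans hWW')

/-- The vectors `vec X` of the matrices `X : Matrix ι κ R` all of whose columns lie in `W`. -/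
def vecColumnsIn [CommSemiring R] (W : Submodule R (ι → R)) (κ : Type*) :
    Submodule R (κ × ι → R) :=
  (Submodule.pi Set.univ fun _ : κ => W).comap (LinearEquiv.curry R R κ ι).toLinearMap

theorem vecColumnsIn_mono [CommSemiring R] {W W' : Submodule R (ι → R)} (h : W ≤ W') :
    vecColumnsIn W κ ≤ vecColumnsIn W' κ :=
  Submodule.comap_mono (Submodule.pi_mono fun _ _ => h)

theorem vec_mem_vecColumnsIn_iff [CommSemiring R] [Fintype κ] {W : Submodule R (ι → R)}
    {X : Matrix ι κ R} : X.vec ∈ vecColumnsIn W κ ↔ LinearMap.range X.mulVecLin ≤ W := by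
  rw [range_mulVecLin_le_iff]
  simp only [vecColumnsIn, Submodule.mem_comap, LinearEquiv.coe_coe, LinearEquiv.coe_curry,
    Submodule.mem_pi, Set.mem_univ, forall_const]
  rfl

theorem sylvester_mulVec_mem_vecColumnsIn [CommSemiring R] [Fintype ι] [DecidableEq ι] [Fintype κ]
    [DecidableEq κ] (A : Matrix ι ι R) (B : Matrix κ κ R) {W W' : Submodule R (ι → R)}
    {v : κ × ι → R} (hv : v ∈ vecColumnsIn W κ) (hWW' : W ≤ W') (hAW : W.map A.mulVecLin ≤ W') :
    (1 ⊗ₖ A + Bᵀ ⊗ₖ 1) *ᵥ v ∈ vecColumnsIn W' κ := by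
  obtain ⟨X, rfl⟩ := vec_bijective.surjective v
  rw [vec_mem_vecColumnsIn_iff] at hv
  rw [sylvester_mulVec_vec, vec_mem_vecColumnsIn_iff]
  exact range_mulVecLin_add_mul_le A B hv hWW' hAW

def blockKrylov [CommSemiring R] [Fintype ι] [DecidableEq ι] (A : Matrix ι ι R) (C : Matrix ι σ R)
    (p : ℕ) : Submodule R (ι → R) :=
  Submodule.span R (Set.range fun q : Fin p × σ => (A ^ (q.1 : ℕ) * C).col q.2)

section BlockKrylov

variable [CommSemiring R] [Fintype ι] [DecidableEq ι] (A : Matrix ι ι R) (C : Matrix ι σ R)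

theorem blockKrylov_mono {p q : ℕ} (h : p ≤ q) : blockKrylov A C p ≤ blockKrylov A C q := by
  refine Submodule.span_mono ?_
  rintro _ ⟨⟨i, j⟩, rfl⟩
  exact ⟨(Fin.castLE h i, j), rfl⟩

theorem range_mulVecLin_le_blockKrylov_one [Fintype σ] :
    LinearMap.range C.mulVecLin ≤ blockKrylov A C 1 := by
  rw [range_mulVecLin, Submodule.span_le]
  rintro _ ⟨j, rfl⟩
  exact Submodule.subset_span ⟨(0, j), by simp⟩

theorem map_blockKrylov_le (p : ℕ) :
    (blockKrylov A C p).map A.mulVecLin ≤ blockKrylov A C (p + 1) := by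
  rw [blockKrylov, Submodule.map_span, Submodule.span_le]
  rintro _ ⟨_, ⟨⟨i, j⟩, rfl⟩, rfl⟩
  refine Submodule.subset_span ⟨(i.succ, j), ?_⟩
  simp only [mulVecLin_apply, Fin.val_succ, pow_succ', Matrix.mul_assoc, col_mul]

theorem sylvester_pow_mulVec_vec_mem [Fintype κ] [DecidableEq κ] [Fintype σ] (B : Matrix κ κ R)
    (D : Matrix κ σ R) (p : ℕ) :
    (1 ⊗ₖ A + Bᵀ ⊗ₖ 1) ^ p *ᵥ (C * Dᵀ).vec ∈ vecColumnsIn (blockKrylov A C (p + 1)) κ := by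
  induction p with
  | zero =>
    rw [pow_zero, one_mulVec, vec_mem_vecColumnsIn_iff, mulVecLin_mul]
    exact (LinearMap.range_comp_le_range _ _).trans (range_mulVecLin_le_blockKrylov_one A C)
  | succ p ih =>
    rw [pow_succ', ← mulVec_mulVec]
    exact sylvester_mulVec_mem_vecColumnsIn A B ih (blockKrylov_mono A C (p + 1).le_succ)
      (map_blockKrylov_le A C (p + 1))

end BlockKrylov

theorem finrank_blockKrylov_le [Field R] [Fintype ι] [DecidableEq ι] [Fintype σ]
    (A : Matrix ι ι R) (C : Matrix ι σ R) (p : ℕ) :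
    Module.finrank R (blockKrylov A C p) ≤ p * Fintype.card σ :=
  (finrank_range_le_card _).trans_eq (by simp)

theorem krylov_sylvester_le_vecColumnsIn [Fintype ι] [DecidableEq ι] [Fintype κ] [DecidableEq κ]
    [Fintype σ] (A : Matrix ι ι ℝ) (B : Matrix κ κ ℝ) (C : Matrix ι σ ℝ) (D : Matrix κ σ ℝ)
    (k : ℕ) : krylov (1 ⊗ₖ A + Bᵀ ⊗ₖ 1) (C * Dᵀ).vec k ≤ vecColumnsIn (blockKrylov A C k) κ := by
  rw [krylov, Submodule.span_le]
  rintro _ ⟨i, rfl⟩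
  exact vecColumnsIn_mono (blockKrylov_mono A C i.isLt) (sylvester_pow_mulVec_vec_mem A C B D i)

end Matrix

theorem stmt6 (n m s : ℕ) (A : Matrix (Fin n) (Fin n) ℝ) (B : Matrix (Fin m) (Fin m) ℝ)
    (C1 : Matrix (Fin n) (Fin s) ℝ) (C2 : Matrix (Fin m) (Fin s) ℝ) (k : ℕ)
    (Z : Matrix (Fin n) (Fin m) ℝ)
    (hZ : _root_.vec Z ∈ krylov
      ((1 : Matrix (Fin m) (Fin m) ℝ) ⊗ₖ A + Bᵀ ⊗ₖ (1 : Matrix (Fin n) (Fin n) ℝ))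
      (_root_.vec (C1 * C2ᵀ)) k) :
    Z.rank ≤ k * s := by
  have hcols : LinearMap.range Z.mulVecLin ≤ blockKrylov A C1 k :=
    vec_mem_vecColumnsIn_iff.mp (krylov_sylvester_le_vecColumnsIn A B C1 C2 k hZ)
  calc Z.rank ≤ Module.finrank ℝ (blockKrylov A C1 k) := Submodule.finrank_mono hcols
    _ ≤ k * s := by simpa using finrank_blockKrylov_le A C1 k
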